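/- arXiv:2305.08138 — 9 statements merged into one kernel-verified Lean document; each statement's English description precedes it below -/
import Mathlib

section
/- Let G be a commutative group written multiplicatively, q a prime, g ∈ G an element of order q, and h := g^w for some w ∈ ZMod q. If v₁, r₁, v₂, r₂ ∈ ZMod q satisfy g^{v₁}·h^{r₁} = g^{v₂}·h^{r₂} and (v₁, r₁) ≠ (v₂, r₂), then r₁ ≠ r₂ and w = (v₁ − v₂)·(r₂ − r₁)⁻¹. In other words, two distinct openings of the same Pedersen commitment determine the discrete logarithm of h in base g. -/
/-!
Since `g` has order `q`, the map `u ↦ g ^ u.val` is injective on `ZMod q` and turns `v + w * r`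
into `g ^ v.val * h ^ r.val`. The two openings therefore give the linear equation
`v₁ + w * r₁ = v₂ + w * r₂` in the field `ZMod q`, which forces `r₁ ≠ r₂` and can be solved for `w`.
-/

section PowVal

variable {M : Type*} [Monoid M] {g : M} {n : ℕ}

theorem pow_val_natCast (hg : orderOf g = n) (m : ℕ) : g ^ (m : ZMod n).val = g ^ m := by
  rw [ZMod.val_natCast, ← hg, pow_mod_orderOf]

theorem pow_val_eq_pow_val_iff [NeZero n] (hg : orderOf g = n) {a b : ZMod n} :
    g ^ a.val = g ^ b.val ↔ a = b := by
  have hfin : IsOfFinOrder g := orderOf_pos_iff.mp (hg ▸ NeZero.pos n)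
  rw [hfin.pow_eq_pow_iff_modEq, hg, ← ZMod.natCast_eq_natCast_iff, ZMod.natCast_zmod_val,
    ZMod.natCast_zmod_val]

theorem pow_val_add_mul [NeZero n] (hg : orderOf g = n) (v w r : ZMod n) :
    g ^ (v + w * r).val = g ^ v.val * (g ^ w.val) ^ r.val := by
  rw [← pow_mul, ← pow_add, ← pow_val_natCast hg (v.val + w.val * r.val)]
  push_cast
  simp only [ZMod.natCast_val, ZMod.cast_id', id]

end PowVal

section Openings

variable {K : Type*} [Field K] {w v₁ r₁ v₂ r₂ : K}

theorem ne_of_add_mul_eq_add_mul (h : v₁ + w * r₁ = v₂ + w * r₂) (hne : (v₁, r₁) ≠ (v₂, r₂)) :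
    r₁ ≠ r₂ := by
  rintro rfl
  exact hne (by simpa using h)

theorem eq_sub_mul_inv_of_add_mul_eq_add_mul (h : v₁ + w * r₁ = v₂ + w * r₂) (hr : r₁ ≠ r₂) :
    w = (v₁ - v₂) * (r₂ - r₁)⁻¹ := by
  have : r₂ - r₁ ≠ 0 := sub_ne_zero.mpr hr.symm
  field_simp
  linear_combination -h

end Openings

/-- Two distinct openings of the same Pedersen commitment determine the
discrete logarithm of `h` in base `g`. -/
theorem pedersen_binding_dlog
    {G : Type*} [CommGroup G] {q : ℕ} (hq : q.Prime)
    (g : G) (hg : orderOf g = q)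
    (w : ZMod q) (h : G) (hh : h = g ^ (w.val))
    (v₁ r₁ v₂ r₂ : ZMod q)
    (heq : g ^ v₁.val * h ^ r₁.val = g ^ v₂.val * h ^ r₂.val)
    (hne : (v₁, r₁) ≠ (v₂, r₂)) :
    r₁ ≠ r₂ ∧ w = (v₁ - v₂) * (r₂ - r₁)⁻¹ := by
  have : Fact q.Prime := ⟨hq⟩
  subst hh
  rw [← pow_val_add_mul hg, ← pow_val_add_mul hg, pow_val_eq_pow_val_iff hg] at heq
  have hr := ne_of_add_mul_eq_add_mul heq hne
  exact ⟨hr, eq_sub_mul_inv_of_add_mul_eq_add_mul heq hr⟩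
end

section
/- With x, v, b ∈ ZMod q such that x + v ≠ 0, the blinded Boneh–Boyen signature σ̃ := g₁^{b·(x+v)⁻¹} satisfies e(σ̃, g₂^x) = e(g₁, g₂)^b · e(σ̃, g₂)^{−v}; i.e., the second equation of the predicate p_BB holds for a correctly blinded signature on v. -/
/-!
Both sides are powers of `t = e(g₁, g₂)`: with `s = b·(x+v)⁻¹`, the left side is `t^{s·x}` and the
right side is `t^{b + s·(-v)}`. Since `t^q = 1`, exponents only matter modulo `q`, and in `ZMod q`
we have `s·x = b - s·v` because `s·(x+v) = b`.
-/

lemma pow_eq_pow_of_natCast_eq {M : Type*} [Monoid M] {q : ℕ} {t : M} (ht : t ^ q = 1)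
    {m n : ℕ} (h : (m : ZMod q) = n) : t ^ m = t ^ n := by
  rw [pow_eq_pow_mod m ht, pow_eq_pow_mod n ht, (ZMod.natCast_eq_natCast_iff m n q).mp h]

lemma bilinear_pow_left {G₁ G₂ GT : Type*} [Monoid G₁] [Group GT] (e : G₁ → G₂ → GT)
    (he_left : ∀ (a a' : G₁) (b : G₂), e (a * a') b = e a b * e a' b)
    (a : G₁) (b : G₂) (m : ℕ) : e (a ^ m) b = e a b ^ m :=
  map_pow (MonoidHom.mk' (e · b) (he_left · · b)) a m

lemma bilinear_pow_right {G₁ G₂ GT : Type*} [Monoid G₂] [Group GT] (e : G₁ → G₂ → GT)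
    (he_right : ∀ (a : G₁) (b b' : G₂), e a (b * b') = e a b * e a b')
    (a : G₁) (b : G₂) (n : ℕ) : e a (b ^ n) = e a b ^ n :=
  map_pow (MonoidHom.mk' (e a) (he_right a)) b n

theorem blinded_boneh_boyen_verification_general
    {q : ℕ} (hq : q.Prime)
    {G₁ G₂ GT : Type*} [CommGroup G₁] [CommGroup G₂] [CommGroup GT]
    (hGT : ∀ x : GT, x ^ q = 1)
    (g₁ : G₁) (g₂ : G₂)
    (e : G₁ → G₂ → GT)
    (he_left : ∀ (a a' : G₁) (b : G₂), e (a * a') b = e a b * e a' b)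
    (he_right : ∀ (a : G₁) (b b' : G₂), e a (b * b') = e a b * e a b')
    (x v b : ZMod q) (hxv : x + v ≠ 0) :
    e (g₁ ^ (b * (x + v)⁻¹).val) (g₂ ^ x.val) =
      (e g₁ g₂) ^ b.val * (e (g₁ ^ (b * (x + v)⁻¹).val) g₂) ^ (-v).val := by
  have : Fact q.Prime := ⟨hq⟩
  rw [bilinear_pow_left e he_left, bilinear_pow_left e he_left, bilinear_pow_right e he_right,
    ← pow_mul, ← pow_mul, ← pow_add]
  apply pow_eq_pow_of_natCast_eq (hGT _)
  push_cast
  simp only [ZMod.natCast_val, ZMod.cast_id', id]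
  field_simp
  ring

/-- A correctly blinded Boneh–Boyen signature `σ̃ = g₁^{b·(x+v)⁻¹}` satisfies
the second equation of the predicate `p_BB`:
`e(σ̃, g₂^x) = e(g₁, g₂)^b · e(σ̃, g₂)^{-v}`. -/
theorem blinded_boneh_boyen_verification
    {q : ℕ} (hq : q.Prime)
    {G₁ G₂ GT : Type*} [CommGroup G₁] [CommGroup G₂] [CommGroup GT]
    (hG₁ : ∀ x : G₁, x ^ q = 1) (hG₂ : ∀ x : G₂, x ^ q = 1)
    (hGT : ∀ x : GT, x ^ q = 1)
    (g₁ h₁ f₁ : G₁) (g₂ f₂ : G₂)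
    (e : G₁ → G₂ → GT)
    (he_left : ∀ (a a' : G₁) (b : G₂), e (a * a') b = e a b * e a' b)
    (he_right : ∀ (a : G₁) (b b' : G₂), e a (b * b') = e a b * e a b')
    (x v b : ZMod q) (hxv : x + v ≠ 0) :
    e (g₁ ^ (b * (x + v)⁻¹).val) (g₂ ^ x.val) =
      (e g₁ g₂) ^ b.val * (e (g₁ ^ (b * (x + v)⁻¹).val) g₂) ^ (-v).val :=
  blinded_boneh_boyen_verification_general hq hGT g₁ g₂ e he_left he_right x v b hxv
end

section
/- Assume additionally that e(g₁, g₂) has order q in G_T. Let u, v, x, b ∈ ZMod q with x + u ≠ 0 and b ≠ 0, and let σ̃ := (g₁^{(x+u)⁻¹})^b be the blinding of a Boneh–Boyen signature on u. Then e(σ̃, g₂^x) = e(g₁, g₂)^b · e(σ̃, g₂)^{−v} holds if and only if u = v. That is, the blinded signature verification equation for value v passes exactly when the signed value equals v. -/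
/-- The blinded Boneh–Boyen signature verification equation for value `v`
passes exactly when the signed value `u` equals `v`. -/
theorem blinded_boneh_boyen_verification_iff
    {q : ℕ} (hq : q.Prime)
    {G₁ G₂ GT : Type*} [CommGroup G₁] [CommGroup G₂] [CommGroup GT]
    (hG₁ : ∀ x : G₁, x ^ q = 1) (hG₂ : ∀ x : G₂, x ^ q = 1)
    (hGT : ∀ x : GT, x ^ q = 1)
    (g₁ h₁ f₁ : G₁) (g₂ f₂ : G₂)
    (e : G₁ → G₂ → GT)
    (he_left : ∀ (a a' : G₁) (b : G₂), e (a * a') b = e a b * e a' b)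
    (he_right : ∀ (a : G₁) (b b' : G₂), e a (b * b') = e a b * e a b')
    (horder : orderOf (e g₁ g₂) = q)
    (u v x b : ZMod q) (hxu : x + u ≠ 0) (hb : b ≠ 0) :
    e ((g₁ ^ ((x + u)⁻¹).val) ^ b.val) (g₂ ^ x.val) =
      (e g₁ g₂) ^ b.val * (e ((g₁ ^ ((x + u)⁻¹).val) ^ b.val) g₂) ^ (-v).val
      ↔ u = v := by
  haveI : Fact q.Prime := ⟨hq⟩
  have e1l : ∀ b : G₂, e 1 b = 1 := by
    intro b
    have := he_left 1 1 b
    simp at this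
    exact this
  have e1r : ∀ a : G₁, e a 1 = 1 := by
    intro a
    have := he_right a 1 1
    simp at this
    exact this
  have epl : ∀ (a : G₁) (c : G₂) (m : ℕ), e (a ^ m) c = e a c ^ m := by
    intro a c m
    induction m with
    | zero => simpa using e1l c
    | succ n ih => rw [pow_succ, he_left, ih, pow_succ]
  have epr : ∀ (a : G₁) (c : G₂) (m : ℕ), e a (c ^ m) = e a c ^ m := by
    intro a c m
    induction m with
    | zero => simpa using e1r a
    | succ n ih => rw [pow_succ, he_right, ih, pow_succ]
  set T := e g₁ g₂ with hT
  set s : ZMod q := (x + u)⁻¹ with hs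
  have key : ∀ M N : ℕ, (T ^ M = T ^ N) ↔ ((M : ZMod q) = (N : ZMod q)) := by
    intro M N
    rw [pow_eq_pow_iff_modEq, horder, ← ZMod.natCast_eq_natCast_iff]
  have lhs_eq : e ((g₁ ^ s.val) ^ b.val) (g₂ ^ x.val) = T ^ (s.val * b.val * x.val) := by
    rw [← pow_mul, epl, epr, ← pow_mul]; ring_nf; rfl
  have rhs_eq : T ^ b.val * (e ((g₁ ^ s.val) ^ b.val) g₂) ^ (-v).val
      = T ^ (b.val + s.val * b.val * (-v).val) := by
    rw [← pow_mul, epl, ← pow_mul, ← pow_add]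
  rw [lhs_eq, rhs_eq, key]
  push_cast [ZMod.natCast_val, ZMod.cast_id]
  have hs0 : s ≠ 0 := inv_ne_zero hxu
  have h3 : s * (x + u) = 1 := by rw [hs]; exact inv_mul_cancel₀ hxu
  constructor
  · intro h2
    have hsb : s * b ≠ 0 := mul_ne_zero hs0 hb
    have hcanc : s * b * (x + v) = s * b * (x + u) := by linear_combination h2 - b * h3
    exact (add_left_cancel (mul_left_cancel₀ hsb hcanc)).symm
  · rintro rfl
    linear_combination b * h3
end

section
/- Assume additionally that e(g₁, g₂) has order q in G_T. Let x, v, b ∈ ZMod q with b ≠ 0, and let σ̃ := g₁^b (the blinding of the fake signature g₁). Then e(σ̃, g₂^x) = e(g₁, g₂)^b · e(σ̃, g₂)^{−v} holds if and only if x + v = 1. In particular, whenever x + v ≠ 1 the verification equation for the blinded fake signature fails. -/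
/-!
Writing `T = e(g₁, g₂)`, bilinearity turns both sides of the verification equation into powers
of `T`: the left side is `T^(b x)` and the right side is `T^(b - b v)`. Since `T` has order `q`,
they agree iff `b x = b (1 - v)` in `ZMod q`, and cancelling the unit `b` leaves `x + v = 1`.
-/

section Pairing

variable {G₁ G₂ GT : Type*} [Group GT] (e : G₁ → G₂ → GT)

theorem pairing_pow_left [Monoid G₁]
    (he_left : ∀ (a a' : G₁) (c : G₂), e (a * a') c = e a c * e a' c)
    (a : G₁) (c : G₂) (n : ℕ) : e (a ^ n) c = e a c ^ n :=
  map_pow (MonoidHom.mk' (e · c) (he_left · · c)) a n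

theorem pairing_pow_right [Monoid G₂]
    (he_right : ∀ (a : G₁) (c c' : G₂), e a (c * c') = e a c * e a c')
    (a : G₁) (c : G₂) (m : ℕ) : e a (c ^ m) = e a c ^ m :=
  map_pow (MonoidHom.mk' (e a) (he_right a)) c m

theorem pairing_pow_pow [Monoid G₁] [Monoid G₂]
    (he_left : ∀ (a a' : G₁) (c : G₂), e (a * a') c = e a c * e a' c)
    (he_right : ∀ (a : G₁) (c c' : G₂), e a (c * c') = e a c * e a c')
    (a : G₁) (c : G₂) (n m : ℕ) : e (a ^ n) (c ^ m) = e a c ^ (n * m) := by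
  rw [pairing_pow_left e he_left, pairing_pow_right e he_right, ← pow_mul, Nat.mul_comm]

end Pairing

theorem pow_eq_pow_iff_natCast_eq {G : Type*} [LeftCancelMonoid G] {T : G} {q : ℕ}
    (hT : orderOf T = q) (m n : ℕ) : T ^ m = T ^ n ↔ (m : ZMod q) = n := by
  rw [pow_eq_pow_iff_modEq, hT, ZMod.natCast_eq_natCast_iff]

theorem mul_eq_add_mul_neg_iff_add_eq_one {R : Type*} [CommRing R] [IsDomain R] {b x v : R}
    (hb : b ≠ 0) : b * x = b + b * -v ↔ x + v = 1 := by
  calc b * x = b + b * -v ↔ b * (x + v) = b * 1 := by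
        constructor <;> intro h <;> linear_combination h
    _ ↔ x + v = 1 := mul_right_inj' hb

theorem blinded_fake_boneh_boyen_verification_iff_general
    {q : ℕ} (hq : q.Prime)
    {G₁ G₂ GT : Type*} [CommGroup G₁] [CommGroup G₂] [CommGroup GT]
    (g₁ : G₁) (g₂ : G₂)
    (e : G₁ → G₂ → GT)
    (he_left : ∀ (a a' : G₁) (b : G₂), e (a * a') b = e a b * e a' b)
    (he_right : ∀ (a : G₁) (b b' : G₂), e a (b * b') = e a b * e a b')
    (horder : orderOf (e g₁ g₂) = q)
    (x v b : ZMod q) (hb : b ≠ 0) :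
    e (g₁ ^ b.val) (g₂ ^ x.val) =
      (e g₁ g₂) ^ b.val * (e (g₁ ^ b.val) g₂) ^ (-v).val
      ↔ x + v = 1 := by
  have : Fact q.Prime := ⟨hq⟩
  rw [pairing_pow_pow e he_left he_right, pairing_pow_left e he_left, ← pow_mul, ← pow_add,
    pow_eq_pow_iff_natCast_eq horder]
  push_cast [ZMod.natCast_val, ZMod.cast_id]
  exact mul_eq_add_mul_neg_iff_add_eq_one hb

/-- For the blinded fake signature `σ̃ = g₁^b`, the blinded Boneh–Boyen
verification equation for value `v` holds iff `x + v = 1`; in particular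
it fails whenever `x + v ≠ 1`. -/
theorem blinded_fake_boneh_boyen_verification_iff
    {q : ℕ} (hq : q.Prime)
    {G₁ G₂ GT : Type*} [CommGroup G₁] [CommGroup G₂] [CommGroup GT]
    (hG₁ : ∀ x : G₁, x ^ q = 1) (hG₂ : ∀ x : G₂, x ^ q = 1)
    (hGT : ∀ x : GT, x ^ q = 1)
    (g₁ h₁ f₁ : G₁) (g₂ f₂ : G₂)
    (e : G₁ → G₂ → GT)
    (he_left : ∀ (a a' : G₁) (b : G₂), e (a * a') b = e a b * e a' b)
    (he_right : ∀ (a : G₁) (b b' : G₂), e a (b * b') = e a b * e a b')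
    (horder : orderOf (e g₁ g₂) = q)
    (x v b : ZMod q) (hb : b ≠ 0) :
    e (g₁ ^ b.val) (g₂ ^ x.val) =
      (e g₁ g₂) ^ b.val * (e (g₁ ^ b.val) g₂) ^ (-v).val
      ↔ x + v = 1 :=
  blinded_fake_boneh_boyen_verification_iff_general hq g₁ g₂ e he_left he_right horder x v b hb
end

section
/- With x, c, m, r ∈ ZMod q such that x + c ≠ 0, the BBS+ signature component S := (f₁ · g₁^m · h₁^r)^{(x+c)⁻¹} satisfies the verification equation e(S, f₂^x · f₂^c) = e(f₁ · g₁^m · h₁^r, f₂). -/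
lemma epow_left {G₁ G₂ GT : Type*} [CommGroup G₁] [CommGroup G₂] [CommGroup GT]
    (e : G₁ → G₂ → GT)
    (he_left : ∀ (a a' : G₁) (b : G₂), e (a * a') b = e a b * e a' b)
    (a : G₁) (b : G₂) (n : ℕ) : e (a ^ n) b = e a b ^ n := by
  induction n with
  | zero =>
    have h1 : e (1 : G₁) b = 1 := by
      have h := he_left 1 1 b
      rw [mul_one] at h
      exact right_eq_mul.mp h
    simpa using h1
  | succ n ih =>
    rw [pow_succ, he_left, ih, pow_succ]

lemma epow_right {G₁ G₂ GT : Type*} [CommGroup G₁] [CommGroup G₂] [CommGroup GT]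
    (e : G₁ → G₂ → GT)
    (he_right : ∀ (a : G₁) (b b' : G₂), e a (b * b') = e a b * e a b')
    (a : G₁) (b : G₂) (n : ℕ) : e a (b ^ n) = e a b ^ n := by
  induction n with
  | zero =>
    have h1 : e a (1 : G₂) = 1 := by
      have h := he_right a 1 1
      rw [mul_one] at h
      exact right_eq_mul.mp h
    simpa using h1
  | succ n ih =>
    rw [pow_succ, he_right, ih, pow_succ]

lemma pow_mod_q {GT : Type*} [CommGroup GT] {q : ℕ} (hGT : ∀ x : GT, x ^ q = 1)
    (t : GT) (n : ℕ) : t ^ n = t ^ (n % q) := by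
  conv_lhs => rw [← Nat.div_add_mod n q]
  rw [pow_add, pow_mul, hGT, one_pow, one_mul]

/-- A BBS+ signature component `S = (f₁·g₁^m·h₁^r)^{(x+c)⁻¹}` satisfies
the verification equation `e(S, f₂^x · f₂^c) = e(f₁·g₁^m·h₁^r, f₂)`. -/
theorem bbs_plus_verification
    {q : ℕ} (hq : q.Prime)
    {G₁ G₂ GT : Type*} [CommGroup G₁] [CommGroup G₂] [CommGroup GT]
    (hG₁ : ∀ x : G₁, x ^ q = 1) (hG₂ : ∀ x : G₂, x ^ q = 1)
    (hGT : ∀ x : GT, x ^ q = 1)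
    (g₁ h₁ f₁ : G₁) (g₂ f₂ : G₂)
    (e : G₁ → G₂ → GT)
    (he_left : ∀ (a a' : G₁) (b : G₂), e (a * a') b = e a b * e a' b)
    (he_right : ∀ (a : G₁) (b b' : G₂), e a (b * b') = e a b * e a b')
    (x c m r : ZMod q) (hxc : x + c ≠ 0) :
    e ((f₁ * g₁ ^ m.val * h₁ ^ r.val) ^ ((x + c)⁻¹).val) (f₂ ^ x.val * f₂ ^ c.val) =
      e (f₁ * g₁ ^ m.val * h₁ ^ r.val) f₂ := by
  haveI : Fact q.Prime := ⟨hq⟩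
  set A := f₁ * g₁ ^ m.val * h₁ ^ r.val
  rw [← pow_add, epow_left e he_left, epow_right e he_right, ← pow_mul]
  set t := e A f₂
  have key : (((x.val + c.val) * ((x + c)⁻¹).val : ℕ) : ZMod q) = ((1 : ℕ) : ZMod q) := by
    push_cast
    rw [ZMod.natCast_val, ZMod.natCast_val, ZMod.natCast_val, ZMod.cast_id,
      ZMod.cast_id, ZMod.cast_id]
    field_simp
  have hmod : ((x.val + c.val) * ((x + c)⁻¹).val) % q = 1 % q := by
    rwa [ZMod.natCast_eq_natCast_iff', ] at key
  rw [pow_mod_q hGT, hmod, ← pow_mod_q hGT, pow_one]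
end

section
/- For any S̃ ∈ G₁, y ∈ G₂ and c̃, r̃, v, bS, bc, br ∈ ZMod q, define 𝔥₁ := e(h₁, f₂)⁻¹, 𝔥₂ := e(g₁, f₂)⁻¹, 𝔷₂ := e(S̃, y·f₂^{c̃}) · e(f₁·g₁^v·h₁^{r̃}, f₂)⁻¹, 𝔤₁ := e(S̃, f₂) and 𝔤₂ := e(g₁, y·f₂^{c̃}). Then the following are equivalent: (i) e(S̃ · g₁^{−bS}, y · f₂^{c̃ − bc}) = e(f₁ · g₁^v · h₁^{r̃ − br}, f₂); (ii) 𝔷₂ = 𝔤₁^{bc} · 𝔤₂^{bS} · 𝔥₁^{br} · 𝔥₂^{bS·bc}. (This is the pairing-algebra equivalence of Equation (1) underlying the distributed proof of knowledge of a BBS+ signature.) -/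
/-! Write `Y := y·f₂^{c̃}` and `F := f₁·g₁^v·h₁^{r̃}`. Expanding by bilinearity, the left side of
(i) is `e(S̃,Y)·e(S̃,f₂)^{-bc}·e(g₁,Y)^{-bS}·e(g₁,f₂)^{bS·bc}` and its right side is
`e(F,f₂)·e(h₁,f₂)^{-br}`, so the quotient of the two sides of (i) equals that of (ii). This computation
may be done with the representatives `val` of the exponents in `ZMod q`, because every element
of `G_T` has order dividing `q`. -/

section ZModPow

variable {q : ℕ} {G : Type*} [Group G] {x : G}

theorem pow_zmod_val_add [NeZero q] (hx : x ^ q = 1) (a b : ZMod q) :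
    x ^ (a + b).val = x ^ a.val * x ^ b.val := by
  rw [ZMod.val_add, ← pow_eq_pow_mod _ hx, pow_add]

theorem pow_zmod_val_neg [NeZero q] (hx : x ^ q = 1) (a : ZMod q) :
    x ^ (-a).val = (x ^ a.val)⁻¹ := by
  refine eq_inv_of_mul_eq_one_left ?_
  rw [← pow_zmod_val_add hx, neg_add_cancel, ZMod.val_zero, pow_zero]

theorem pow_zmod_val_sub [NeZero q] (hx : x ^ q = 1) (a b : ZMod q) :
    x ^ (a - b).val = x ^ a.val * (x ^ b.val)⁻¹ := by
  rw [sub_eq_add_neg, pow_zmod_val_add hx, pow_zmod_val_neg hx]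

theorem pow_zmod_val_mul (hx : x ^ q = 1) (a b : ZMod q) :
    x ^ (a * b).val = (x ^ a.val) ^ b.val := by
  rw [ZMod.val_mul, ← pow_eq_pow_mod _ hx, pow_mul]

end ZModPow

def MonoidHom.mk₂ {G₁ G₂ GT : Type*} [MulOneClass G₁] [MulOneClass G₂] [CommGroup GT]
    (e : G₁ → G₂ → GT)
    (he_left : ∀ (a a' : G₁) (b : G₂), e (a * a') b = e a b * e a' b)
    (he_right : ∀ (a : G₁) (b b' : G₂), e a (b * b') = e a b * e a b') :
    G₁ →* G₂ →* GT :=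
  MonoidHom.mk' (fun a => MonoidHom.mk' (e a) (he_right a))
    fun a a' => MonoidHom.ext (he_left a a')

theorem bbs_plus_dpk_equation_equivalence_general
    {q : ℕ} (hq : q.Prime)
    {G₁ G₂ GT : Type*} [CommGroup G₁] [CommGroup G₂] [CommGroup GT]
    (hGT : ∀ x : GT, x ^ q = 1)
    (g₁ h₁ f₁ : G₁) (f₂ : G₂)
    (e : G₁ → G₂ → GT)
    (he_left : ∀ (a a' : G₁) (b : G₂), e (a * a') b = e a b * e a' b)
    (he_right : ∀ (a : G₁) (b b' : G₂), e a (b * b') = e a b * e a b')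
    (Stilde : G₁) (y : G₂) (ctilde rtilde v bS bc br : ZMod q) :
    (e (Stilde * g₁ ^ (-bS).val) (y * f₂ ^ (ctilde - bc).val) =
        e (f₁ * g₁ ^ v.val * h₁ ^ (rtilde - br).val) f₂)
      ↔
    (e Stilde (y * f₂ ^ ctilde.val) *
        (e (f₁ * g₁ ^ v.val * h₁ ^ rtilde.val) f₂)⁻¹ =
      (e Stilde f₂) ^ bc.val * (e g₁ (y * f₂ ^ ctilde.val)) ^ bS.val *
        ((e h₁ f₂)⁻¹) ^ br.val * ((e g₁ f₂)⁻¹) ^ (bS * bc).val) := by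
  have : NeZero q := ⟨hq.ne_zero⟩
  set E := MonoidHom.mk₂ e he_left he_right
  have hE : ∀ a b, e a b = E a b := fun _ _ => rfl
  refine eq_iff_eq_of_div_eq_div ?_
  simp only [hE, map_mul, map_pow, MonoidHom.mul_apply, MonoidHom.pow_apply,
    pow_zmod_val_sub (hGT _), pow_zmod_val_neg (hGT _), pow_zmod_val_mul (hGT _),
    mul_pow, inv_pow, div_eq_mul_inv, mul_inv_rev, inv_inv, ← pow_mul]
  simp only [← hE]
  rw [Nat.mul_comm ctilde.val]
  simp only [mul_comm, mul_assoc, mul_left_comm]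

/-- The pairing-algebra equivalence underlying the distributed proof of
knowledge of a BBS+ signature: unblinding `(S̃, c̃, r̃)` by `(bS, bc, br)`
passes BBS+ verification iff `𝔷₂ = 𝔤₁^{bc}·𝔤₂^{bS}·𝔥₁^{br}·𝔥₂^{bS·bc}`. -/
theorem bbs_plus_dpk_equation_equivalence
    {q : ℕ} (hq : q.Prime)
    {G₁ G₂ GT : Type*} [CommGroup G₁] [CommGroup G₂] [CommGroup GT]
    (hG₁ : ∀ x : G₁, x ^ q = 1) (hG₂ : ∀ x : G₂, x ^ q = 1)
    (hGT : ∀ x : GT, x ^ q = 1)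
    (g₁ h₁ f₁ : G₁) (g₂ f₂ : G₂)
    (e : G₁ → G₂ → GT)
    (he_left : ∀ (a a' : G₁) (b : G₂), e (a * a') b = e a b * e a' b)
    (he_right : ∀ (a : G₁) (b b' : G₂), e a (b * b') = e a b * e a b')
    (Stilde : G₁) (y : G₂) (ctilde rtilde v bS bc br : ZMod q) :
    (e (Stilde * g₁ ^ (-bS).val) (y * f₂ ^ (ctilde - bc).val) =
        e (f₁ * g₁ ^ v.val * h₁ ^ (rtilde - br).val) f₂)
      ↔
    (e Stilde (y * f₂ ^ ctilde.val) *
        (e (f₁ * g₁ ^ v.val * h₁ ^ rtilde.val) f₂)⁻¹ =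
      (e Stilde f₂) ^ bc.val * (e g₁ (y * f₂ ^ ctilde.val)) ^ bS.val *
        ((e h₁ f₂)⁻¹) ^ br.val * ((e g₁ f₂)⁻¹) ^ (bS * bc).val) :=
  bbs_plus_dpk_equation_equivalence_general hq hGT g₁ h₁ f₁ f₂ e he_left he_right Stilde y ctilde
    rtilde v bS bc br
end

section
/- Let x, c, v, ρ, bS, bc, br ∈ ZMod q with x + c ≠ 0, and set y := f₂^x, S̃ := (f₁ · g₁^v · h₁^{ρ})^{(x+c)⁻¹} · g₁^{bS}, c̃ := c + bc and r̃ := ρ + br (an honestly blinded BBS+ signature on v). Then, defining 𝔥₁ := e(h₁, f₂)⁻¹, 𝔥₂ := e(g₁, f₂)⁻¹, 𝔷₂ := e(S̃, y·f₂^{c̃}) · e(f₁·g₁^v·h₁^{r̃}, f₂)⁻¹, 𝔤₁ := e(S̃, f₂) and 𝔤₂ := e(g₁, y·f₂^{c̃}), it holds that 𝔷₂ = 𝔤₁^{bc} · 𝔤₂^{bS} · 𝔥₁^{br} · 𝔥₂^{bS·bc}. -/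
section aux

variable {q : ℕ} [NeZero q] {G : Type*}

private lemma pow_mod_of [Monoid G] (a : G) (ha : a ^ q = 1) (n : ℕ) :
    a ^ n = a ^ (n % q) := by
  conv_lhs => rw [← Nat.div_add_mod n q, pow_add, pow_mul, ha, one_pow, one_mul]

private lemma pow_val_add [Monoid G] (a : G) (ha : a ^ q = 1) (u w : ZMod q) :
    a ^ (u + w).val = a ^ u.val * a ^ w.val := by
  rw [ZMod.val_add, ← pow_add, ← pow_mod_of a ha]

private lemma pow_val_mul [Monoid G] (a : G) (ha : a ^ q = 1) (u w : ZMod q) :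
    a ^ (u * w).val = (a ^ u.val) ^ w.val := by
  rw [ZMod.val_mul, ← pow_mul, ← pow_mod_of a ha]

end aux

/-- For an honestly blinded BBS+ signature
`S̃ = (f₁·g₁^v·h₁^ρ)^{(x+c)⁻¹}·g₁^{bS}`, `c̃ = c + bc`, `r̃ = ρ + br`,
the DPK equation `𝔷₂ = 𝔤₁^{bc}·𝔤₂^{bS}·𝔥₁^{br}·𝔥₂^{bS·bc}` holds. -/
theorem bbs_plus_dpk_equation_of_honest_blinding
    {q : ℕ} (hq : q.Prime)
    {G₁ G₂ GT : Type*} [CommGroup G₁] [CommGroup G₂] [CommGroup GT]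
    (hG₁ : ∀ x : G₁, x ^ q = 1) (hG₂ : ∀ x : G₂, x ^ q = 1)
    (hGT : ∀ x : GT, x ^ q = 1)
    (g₁ h₁ f₁ : G₁) (g₂ f₂ : G₂)
    (e : G₁ → G₂ → GT)
    (he_left : ∀ (a a' : G₁) (b : G₂), e (a * a') b = e a b * e a' b)
    (he_right : ∀ (a : G₁) (b b' : G₂), e a (b * b') = e a b * e a b')
    (x c v ρ bS bc br : ZMod q) (hxc : x + c ≠ 0)
    (y : G₂) (hy : y = f₂ ^ x.val)
    (Stilde : G₁)
    (hS : Stilde = (f₁ * g₁ ^ v.val * h₁ ^ ρ.val) ^ ((x + c)⁻¹).val * g₁ ^ bS.val)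
    (ctilde rtilde : ZMod q) (hc : ctilde = c + bc) (hr : rtilde = ρ + br) :
    e Stilde (y * f₂ ^ ctilde.val) *
        (e (f₁ * g₁ ^ v.val * h₁ ^ rtilde.val) f₂)⁻¹ =
      (e Stilde f₂) ^ bc.val * (e g₁ (y * f₂ ^ ctilde.val)) ^ bS.val *
        ((e h₁ f₂)⁻¹) ^ br.val * ((e g₁ f₂)⁻¹) ^ (bS * bc).val := by
  haveI : NeZero q := ⟨hq.ne_zero⟩
  haveI : Fact (1 < q) := ⟨hq.one_lt⟩
  haveI : Fact q.Prime := ⟨hq⟩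
  have e_one_left : ∀ b, e 1 b = 1 := by
    intro b
    have h := he_left 1 1 b
    rw [one_mul] at h
    exact (left_eq_mul.mp h)
  have e_one_right : ∀ a, e a 1 = 1 := by
    intro a
    have h := he_right a 1 1
    rw [one_mul] at h
    exact (left_eq_mul.mp h)
  have epl : ∀ (a : G₁) (b : G₂) (n : ℕ), e (a ^ n) b = (e a b) ^ n := by
    intro a b n
    induction n with
    | zero => simp [e_one_left]
    | succ n ih => rw [pow_succ, he_left, ih, pow_succ]
  have epr : ∀ (a : G₁) (b : G₂) (n : ℕ), e a (b ^ n) = (e a b) ^ n := by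
    intro a b n
    induction n with
    | zero => simp [e_one_right]
    | succ n ih => rw [pow_succ, he_right, ih, pow_succ]
  set A : G₁ := f₁ * g₁ ^ v.val * h₁ ^ ρ.val with hA
  set i : ZMod q := (x + c)⁻¹ with hi
  -- the second pairing argument
  have harg : y * f₂ ^ ctilde.val = f₂ ^ (x + ctilde).val := by
    rw [hy, pow_val_add f₂ (hG₂ f₂)]
  -- first factor of LHS
  have h1 : e Stilde (y * f₂ ^ ctilde.val) =
      (e A f₂) ^ ((i * (x + ctilde)).val) * (e g₁ f₂) ^ ((bS * (x + ctilde)).val) := by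
    rw [harg, epr, hS, he_left, epl, epl, mul_pow,
      ← pow_val_mul _ (hGT (e A f₂)), ← pow_val_mul _ (hGT (e g₁ f₂))]
  -- second factor of LHS
  have h2 : e (f₁ * g₁ ^ v.val * h₁ ^ rtilde.val) f₂ =
      e A f₂ * (e h₁ f₂) ^ br.val := by
    have : f₁ * g₁ ^ v.val * h₁ ^ rtilde.val = A * h₁ ^ br.val := by
      rw [hr, pow_val_add h₁ (hG₁ h₁), hA, mul_assoc, mul_assoc, mul_assoc]
    rw [this, he_left, epl]
  -- e Stilde f₂
  have h3 : e Stilde f₂ = (e A f₂) ^ i.val * (e g₁ f₂) ^ bS.val := by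
    rw [hS, he_left, epl, epl]
  -- e g₁ (y * f₂^ctilde)
  have h4 : e g₁ (y * f₂ ^ ctilde.val) = (e g₁ f₂) ^ ((x + ctilde).val) := by
    rw [harg, epr]
  -- key exponent identity
  have hkey : i * (x + ctilde) = 1 + i * bc := by
    have hinv : i * (x + c) = 1 := by
      rw [hi]; exact inv_mul_cancel₀ hxc
    rw [hc, ← add_assoc, mul_add, hinv]
  rw [h1, h2, h3, h4, hkey, pow_val_add _ (hGT (e A f₂)), ZMod.val_one, pow_one]
  rw [mul_pow, ← pow_val_mul _ (hGT (e A f₂)), ← pow_val_mul _ (hGT (e g₁ f₂)),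
    ← pow_val_mul _ (hGT (e g₁ f₂)), inv_pow, inv_pow]
  -- now pure commutative-group bookkeeping plus exponent arithmetic
  have hexp : bS * (x + ctilde) = (x + ctilde) * bS + bS * bc - bS * bc := by ring
  rw [hexp, sub_eq_add_neg, pow_val_add _ (hGT (e g₁ f₂)),
    pow_val_add _ (hGT (e g₁ f₂))]
  have hneg : (e g₁ f₂) ^ (-(bS * bc)).val = ((e g₁ f₂) ^ (bS * bc).val)⁻¹ := by
    have h := pow_val_add (e g₁ f₂) (hGT (e g₁ f₂)) (bS * bc) (-(bS * bc))
    rw [add_neg_cancel] at h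
    simp only [ZMod.val_zero, pow_zero] at h
    exact (eq_inv_of_mul_eq_one_right h.symm)
  rw [hneg]
  simp only [mul_inv, mul_comm, mul_assoc, mul_left_comm, inv_inv]
  group
end

section
/- Let q be a prime and G a commutative group written multiplicatively in which every element x satisfies x^q = 1. Let m, ℓ, ℓ′ be positive integers, g : Fin ℓ → Fin ℓ′ → G, witness shares ω : Fin m → Fin ℓ′ → ZMod q, randomness shares r : Fin m → Fin ℓ′ → ZMod q, and a challenge c ∈ ZMod q. Define y_i := ∏_{j} (g i j)^{Σ_k ω k j}, a_i := ∏_{k} ∏_{j} (g i j)^{r k j}, and z_j := Σ_k (r k j − c · ω k j). Then for every i ∈ Fin ℓ: a_i = y_i^c · ∏_{j} (g i j)^{z_j}. (Completeness of the (m,m)-threshold Σ-protocol proof of knowledge with additively shared witnesses.) -/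
/-!
Writing `a ^ u` for `a ^ u.val` with `u : ZMod q`, the exponent-`q` hypothesis makes
`u ↦ a ^ u` a homomorphism from `ZMod q`. Both sides of the verification equation then
reduce, coordinate by coordinate, to `g i j ^ (∑ₖ r k j)`: the commitment multiplies the
shares of `r`, and in the response the `c · ω` terms cancel against `y^c`.
-/

section ZModPow

variable {M : Type*} {q : ℕ} {x : M}

theorem pow_eq_pow_of_natCast_eq_s10 [Monoid M] (hx : x ^ q = 1) {a b : ℕ}
    (h : (a : ZMod q) = b) : x ^ a = x ^ b := by
  rw [pow_eq_pow_mod a hx, pow_eq_pow_mod b hx, (ZMod.natCast_eq_natCast_iff' a b q).mp h]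

variable [NeZero q]

theorem pow_zmod_val_add_s10 [Monoid M] (hx : x ^ q = 1) (u w : ZMod q) :
    x ^ (u + w).val = x ^ u.val * x ^ w.val := by
  rw [← pow_add]
  exact pow_eq_pow_of_natCast_eq_s10 hx (by push_cast [ZMod.natCast_val, ZMod.cast_id]; rfl)

theorem pow_zmod_val_pow_val [Monoid M] (hx : x ^ q = 1) (u w : ZMod q) :
    (x ^ u.val) ^ w.val = x ^ (u * w).val := by
  rw [← pow_mul]
  exact pow_eq_pow_of_natCast_eq_s10 hx (by push_cast [ZMod.natCast_val, ZMod.cast_id]; rfl)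

theorem prod_pow_zmod_val [CommMonoid M] (hx : x ^ q = 1) {ι : Type*} (s : Finset ι)
    (f : ι → ZMod q) : ∏ k ∈ s, x ^ (f k).val = x ^ (∑ k ∈ s, f k).val := by
  rw [Finset.prod_pow_eq_pow_sum]
  exact pow_eq_pow_of_natCast_eq_s10 hx (by push_cast [ZMod.natCast_val, ZMod.cast_id]; rfl)

end ZModPow

theorem threshold_sigma_protocol_completeness_general
    {q : ℕ} (hq : q.Prime)
    {G : Type*} [CommGroup G] (hG : ∀ x : G, x ^ q = 1)
    (m ℓ ℓ' : ℕ)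
    (g : Fin ℓ → Fin ℓ' → G)
    (ω : Fin m → Fin ℓ' → ZMod q) (r : Fin m → Fin ℓ' → ZMod q)
    (c : ZMod q) :
    ∀ i : Fin ℓ,
      (∏ k : Fin m, ∏ j : Fin ℓ', (g i j) ^ (r k j).val) =
        (∏ j : Fin ℓ', (g i j) ^ (∑ k : Fin m, ω k j).val) ^ c.val *
          ∏ j : Fin ℓ', (g i j) ^ (∑ k : Fin m, (r k j - c * ω k j)).val := by
  have : NeZero q := ⟨hq.ne_zero⟩
  intro i
  rw [Finset.prod_comm, ← Finset.prod_pow, ← Finset.prod_mul_distrib]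
  refine Finset.prod_congr rfl fun j _ => ?_
  have hx := hG (g i j)
  rw [prod_pow_zmod_val hx, pow_zmod_val_pow_val hx, ← pow_zmod_val_add_s10 hx,
    Finset.sum_sub_distrib, ← Finset.mul_sum]
  congr 2
  ring

/-- Completeness of the (m,m)-threshold Σ-protocol proof of knowledge with
additively shared witnesses: the verifier's check `aᵢ = yᵢ^c · ∏ⱼ gᵢⱼ^{zⱼ}`
passes for honestly generated commitments and responses. -/
theorem threshold_sigma_protocol_completeness
    {q : ℕ} (hq : q.Prime)
    {G : Type*} [CommGroup G] (hG : ∀ x : G, x ^ q = 1)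
    (m ℓ ℓ' : ℕ) (hm : 0 < m) (hℓ : 0 < ℓ) (hℓ' : 0 < ℓ')
    (g : Fin ℓ → Fin ℓ' → G)
    (ω : Fin m → Fin ℓ' → ZMod q) (r : Fin m → Fin ℓ' → ZMod q)
    (c : ZMod q) :
    ∀ i : Fin ℓ,
      (∏ k : Fin m, ∏ j : Fin ℓ', (g i j) ^ (r k j).val) =
        (∏ j : Fin ℓ', (g i j) ^ (∑ k : Fin m, ω k j).val) ^ c.val *
          ∏ j : Fin ℓ', (g i j) ^ (∑ k : Fin m, (r k j - c * ω k j)).val :=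
  threshold_sigma_protocol_completeness_general hq hG m ℓ ℓ' g ω r c
end

section
/- Let N be a positive natural number and B, m₁, m₂ natural numbers with m₁ ≤ B and m₂ ≤ B. For i ∈ {1,2}, let P_i be the probability distribution on ℕ of m_i + X, where X is uniformly distributed on {0, 1, …, N−1}. Then ∑_{k ∈ ℕ} |P₁(k) − P₂(k)| ≤ 2·B/N. (Adding a uniformly random integer mask from a range much larger than the message bound statistically hides the message: the statistical distance between the masked distributions of any two bounded messages is at most B/N. This is the almost-perfect integer blinding property used for the padded blinding factors in the DB-RSM protocol.) -/
/-! The two mass functions are `1/N` times the indicators of the intervals `[m₁, m₁ + N)` and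
`[m₂, m₂ + N)`, so the sum equals `|I₁ ∆ I₂| / N`. Two translates of an interval of length `N`
share at least `N - |m₁ - m₂|` points, hence their symmetric difference has at most
`2 |m₁ - m₂| ≤ 2B` points. -/

open Finset
open scoped symmDiff

theorem card_symmDiff_add_two_mul_card_inter {α : Type*} [DecidableEq α] (s t : Finset α) :
    #(s ∆ t) + 2 * #(s ∩ t) = #s + #t := by
  have h := card_union_add_card_inter s t
  have h' := card_le_card (inter_subset_union (s := s) (t := t))
  rw [symmDiff_eq_sup_sdiff_inf, card_sdiff_of_subset inf_le_sup, sup_eq_union, inf_eq_inter]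
  omega

theorem card_symmDiff_Ico_add_le (a b N : ℕ) :
    #(Ico a (a + N) ∆ Ico b (b + N)) ≤ 2 * (max a b - min a b) := by
  have h := card_symmDiff_add_two_mul_card_inter (Ico a (a + N)) (Ico b (b + N))
  rw [Ico_inter_Ico, Nat.card_Ico, Nat.card_Ico, Nat.card_Ico] at h
  omega

theorem tsum_abs_sub_indicator_finset {α : Type*} [DecidableEq α] (s t : Finset α) (c : ℝ) :
    ∑' x, |(s : Set α).indicator (fun _ ↦ c) x - (t : Set α).indicator (fun _ ↦ c) x| =
      #(s ∆ t) * |c| := by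
  simp_rw [← Set.abs_indicator_symmDiff, ← coe_symmDiff, Set.comp_indicator_const c abs abs_zero,
    ← sum_eq_tsum_indicator, sum_const, nsmul_eq_mul]

theorem integer_blinding_statistical_distance_general
    (N B m₁ m₂ : ℕ) (h₁ : m₁ ≤ B) (h₂ : m₂ ≤ B) :
    ∑' k : ℕ,
        |(if m₁ ≤ k ∧ k < m₁ + N then (1 : ℝ) / N else 0) -
          (if m₂ ≤ k ∧ k < m₂ + N then (1 : ℝ) / N else 0)| ≤
      2 * B / N := by
  have hsum := tsum_abs_sub_indicator_finset (Ico m₁ (m₁ + N)) (Ico m₂ (m₂ + N)) (1 / N)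
  simp only [coe_Ico, Set.indicator_apply, Set.mem_Ico] at hsum
  have hcard : #(Ico m₁ (m₁ + N) ∆ Ico m₂ (m₂ + N)) ≤ 2 * B :=
    (card_symmDiff_Ico_add_le m₁ m₂ N).trans (by omega)
  rw [hsum, abs_of_nonneg (by positivity), mul_one_div]
  gcongr
  exact_mod_cast hcard

/-- Almost-perfect integer blinding: adding a uniformly random mask from
`{0, …, N−1}` to a message bounded by `B` yields distributions whose total
sum of absolute differences (twice the statistical distance) is at most
`2·B/N`. -/
theorem integer_blinding_statistical_distance
    (N B m₁ m₂ : ℕ) (hN : 0 < N) (h₁ : m₁ ≤ B) (h₂ : m₂ ≤ B) :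
    ∑' k : ℕ,
        |(if m₁ ≤ k ∧ k < m₁ + N then (1 : ℝ) / N else 0) -
          (if m₂ ≤ k ∧ k < m₂ + N then (1 : ℝ) / N else 0)| ≤
      2 * B / N :=
  integer_blinding_statistical_distance_general N B m₁ m₂ h₁ h₂
end
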